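/- There exist reals ρ and P such that the perfect-fluid stress-energy tensor on 4-dimensional Minkowski space determined by a unit timelike vector u satisfies the strong energy condition, i.e. T(t,t) − (tr T/2) η(t,t) ≥ 0 for every timelike t, but violates the weak energy condition, i.e. there is a timelike t with T(t,t) < 0. (The SEC does not imply the WEC.) -/
import Mathlib


/-- The Minkowski metric on `ℝ⁴`: `η(x,y) = -x₀y₀ + ∑_{i=1}^{3} xᵢyᵢ`. -/
def minkowski (x y : Fin 4 → ℝ) : ℝ :=
  ∑ i : Fin 4, (if (i : ℕ) = 0 then (-1 : ℝ) else 1) * x i * y i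

/-- The perfect-fluid stress-energy tensor determined by a unit timelike vector `u`,
energy density `ρ` and pressure `P`: `T(x,y) = (ρ+P)η(u,x)η(u,y) + P η(x,y)`. -/
def perfectFluid (u : Fin 4 → ℝ) (ρ P : ℝ) (x y : Fin 4 → ℝ) : ℝ :=
  (ρ + P) * minkowski u x * minkowski u y + P * minkowski x y

/-- On 4-dimensional Minkowski space there are `ρ`, `P` such that the perfect fluid
satisfies the strong energy condition `T(t,t) - (tr T/2) η(t,t) ≥ 0` (with
`tr T = -ρ + 3P`) for every timelike `t`, yet violates the weak energy condition:
`T(t,t) < 0` for some timelike `t`. -/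
theorem sec_does_not_imply_wec (u : Fin 4 → ℝ) (hu : minkowski u u = -1) :
    ∃ ρ P : ℝ,
      (∀ t : Fin 4 → ℝ, minkowski t t < 0 →
        0 ≤ perfectFluid u ρ P t t - ((-ρ + 3 * P) / 2) * minkowski t t) ∧
      (∃ t : Fin 4 → ℝ, minkowski t t < 0 ∧ perfectFluid u ρ P t t < 0) := by
  refine ⟨-1, 1, fun t ht => ?_, u, by rw [hu]; norm_num, ?_⟩
  · simp only [perfectFluid]
    nlinarith [sq_nonneg (minkowski u t)]
  · simp only [perfectFluid, hu]
    norm_num
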